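/- arXiv:2503.01864 — 3 statements merged into one kernel-verified Lean document; each statement's English description precedes it below -/
import Mathlib

section
/- Let X and Y be finite nonempty sets, θ_ref : X × Y → ℝ, β > 0, and r : X × Y → ℝ. Define the population DPO loss L(θ) = (1/(|X|·|Y|²)) · Σ_{x∈X} Σ_{y,y'∈Y} −σ(r(x,y) − r(x,y'))·log σ(h_θ(x,y,y')), where h_θ(x,y,y') = β·[(θ(x,y) − θ_ref(x,y)) − (θ(x,y') − θ_ref(x,y'))] and σ(u) = 1/(1+exp(−u)). Then θ* := θ_ref + r/β is a global minimizer of L, and every global minimizer θ̂ of L satisfies h_{θ̂}(x,y,y') = r(x,y) − r(x,y') for all x ∈ X and y, y' ∈ Y. -/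
/-!
Pairing the summand at `(y, y')` with the one at `(y', y)` and using `σ(-u) = 1 - σ(u)` turns the
loss into a sum of binary cross-entropies `H(σ(d), σ(h))` between the Bernoulli laws of the
true preference margin `d = r(x,y) - r(x,y')` and of the implicit margin `h = h_θ(x,y,y')`.
By Gibbs' inequality each of these is minimised exactly at `σ(h) = σ(d)`, i.e. at `h = d`, and
`θ* = θ_ref + r/β` attains `h = d` everywhere.
-/

noncomputable def sigm (u : ℝ) : ℝ := 1 / (1 + Real.exp (-u))

open Real Finset

lemma sigm_eq_sigmoid : sigm = sigmoid := by
  funext u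
  rw [sigm, sigmoid_def, one_div]

lemma mul_log_div_le_sub {a b : ℝ} (ha : 0 < a) (hb : 0 < b) : a * log (b / a) ≤ b - a :=
  calc a * log (b / a) ≤ a * (b / a - 1) :=
        mul_le_mul_of_nonneg_left (log_le_sub_one_of_pos (div_pos hb ha)) ha.le
    _ = b - a := by field_simp

lemma mul_log_div_lt_sub {a b : ℝ} (ha : 0 < a) (hb : 0 < b) (hne : b ≠ a) :
    a * log (b / a) < b - a :=
  calc a * log (b / a) < a * (b / a - 1) := by
        refine mul_lt_mul_of_pos_left (log_lt_sub_one_of_pos (div_pos hb ha) ?_) ha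
        rwa [Ne, div_eq_one_iff_eq ha.ne']
    _ = b - a := by field_simp

lemma binary_cross_entropy_self_lt {p q : ℝ} (hp₀ : 0 < p) (hp₁ : p < 1) (hq₀ : 0 < q)
    (hq₁ : q < 1) (hne : q ≠ p) :
    -p * log p - (1 - p) * log (1 - p) < -p * log q - (1 - p) * log (1 - q) := by
  have hp' : 0 < 1 - p := by linarith
  have hq' : 0 < 1 - q := by linarith
  have h₁ := mul_log_div_lt_sub hp₀ hq₀ hne
  have h₂ := mul_log_div_le_sub hp' hq'
  rw [log_div hq₀.ne' hp₀.ne'] at h₁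
  rw [log_div hq'.ne' hp'.ne'] at h₂
  linarith

lemma sigmoid_cross_entropy_self_lt {d t : ℝ} (hne : t ≠ d) :
    -sigmoid d * log (sigmoid d) - sigmoid (-d) * log (sigmoid (-d))
      < -sigmoid d * log (sigmoid t) - sigmoid (-d) * log (sigmoid (-t)) := by
  simp only [sigmoid_neg]
  exact binary_cross_entropy_self_lt (sigmoid_pos d) (sigmoid_lt_one d) (sigmoid_pos t)
    (sigmoid_lt_one t) (sigmoid_injective.ne hne)

lemma sigmoid_cross_entropy_self_le (d t : ℝ) :
    -sigmoid d * log (sigmoid d) - sigmoid (-d) * log (sigmoid (-d))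
      ≤ -sigmoid d * log (sigmoid t) - sigmoid (-d) * log (sigmoid (-t)) := by
  rcases eq_or_ne t d with rfl | hne
  · rfl
  · exact (sigmoid_cross_entropy_self_lt hne).le

section Antisymmetric

variable {Y : Type*} [Fintype Y] {d h : Y → Y → ℝ}

lemma two_mul_sum_sum_eq_sum_sum_add_swap {R : Type*} [NonAssocSemiring R]
    (f : Y → Y → R) : 2 * ∑ y, ∑ y', f y y' = ∑ y, ∑ y', (f y y' + f y' y) := by
  simp only [two_mul, sum_add_distrib]
  congr 1
  exact sum_comm

lemma two_mul_sum_sum_sigmoid_log_sigmoid (hd : ∀ y y', d y' y = -d y y')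
    (hh : ∀ y y', h y' y = -h y y') :
    2 * ∑ y, ∑ y', -sigmoid (d y y') * log (sigmoid (h y y'))
      = ∑ y, ∑ y', (-sigmoid (d y y') * log (sigmoid (h y y'))
          - sigmoid (-d y y') * log (sigmoid (-h y y'))) := by
  rw [two_mul_sum_sum_eq_sum_sum_add_swap]
  refine sum_congr rfl fun y _ => sum_congr rfl fun y' _ => ?_
  rw [hd y y', hh y y']
  ring

lemma sum_sum_sigmoid_log_sigmoid_self_le (hd : ∀ y y', d y' y = -d y y')
    (hh : ∀ y y', h y' y = -h y y') :
    ∑ y, ∑ y', -sigmoid (d y y') * log (sigmoid (d y y'))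
      ≤ ∑ y, ∑ y', -sigmoid (d y y') * log (sigmoid (h y y')) := by
  refine le_of_mul_le_mul_left ?_ two_pos
  rw [two_mul_sum_sum_sigmoid_log_sigmoid hd hd, two_mul_sum_sum_sigmoid_log_sigmoid hd hh]
  exact sum_le_sum fun y _ => sum_le_sum fun y' _ => sigmoid_cross_entropy_self_le _ _

lemma sum_sum_sigmoid_log_sigmoid_self_lt (hd : ∀ y y', d y' y = -d y y')
    (hh : ∀ y y', h y' y = -h y y') {y₀ y₀' : Y} (hne : h y₀ y₀' ≠ d y₀ y₀') :
    ∑ y, ∑ y', -sigmoid (d y y') * log (sigmoid (d y y'))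
      < ∑ y, ∑ y', -sigmoid (d y y') * log (sigmoid (h y y')) := by
  refine lt_of_mul_lt_mul_left ?_ zero_le_two
  rw [two_mul_sum_sum_sigmoid_log_sigmoid hd hd, two_mul_sum_sum_sigmoid_log_sigmoid hd hh]
  refine sum_lt_sum (fun y _ => sum_le_sum fun y' _ => sigmoid_cross_entropy_self_le _ _)
    ⟨y₀, mem_univ _, sum_lt_sum (fun y' _ => sigmoid_cross_entropy_self_le _ _)
      ⟨y₀', mem_univ _, sigmoid_cross_entropy_self_lt hne⟩⟩

end Antisymmetric

theorem dpo_population_global_minimizers_general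
    {X Y : Type*} [Fintype X] [Fintype Y]
    (θref : X × Y → ℝ) (β : ℝ) (hβ : 0 < β) (r : X × Y → ℝ)
    (hmargin : (X × Y → ℝ) → X → Y → Y → ℝ)
    (hh : ∀ θ : X × Y → ℝ, ∀ x y y', hmargin θ x y y' =
      β * ((θ (x, y) - θref (x, y)) - (θ (x, y') - θref (x, y'))))
    (L : (X × Y → ℝ) → ℝ)
    (hL : ∀ θ : X × Y → ℝ, L θ =
      (1 / (Fintype.card X * (Fintype.card Y : ℝ) ^ 2)) *
        ∑ x, ∑ y, ∑ y',
          -sigm (r (x, y) - r (x, y')) * Real.log (sigm (hmargin θ x y y')))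
    (θstar : X × Y → ℝ) (hθstar : θstar = θref + (1 / β) • r) :
    (∀ θ : X × Y → ℝ, L θstar ≤ L θ) ∧
    (∀ θhat : X × Y → ℝ, (∀ θ, L θhat ≤ L θ) →
      ∀ x y y', hmargin θhat x y y' = r (x, y) - r (x, y')) := by
  simp only [sigm_eq_sigmoid] at hL
  have hr_anti (x : X) (y y' : Y) : r (x, y') - r (x, y) = -(r (x, y) - r (x, y')) := by ring
  have hmargin_anti (θ : X × Y → ℝ) (x : X) (y y' : Y) :
      hmargin θ x y' y = -hmargin θ x y y' := by
    rw [hh, hh]; ring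
  have hmargin_star (x : X) (y y' : Y) : hmargin θstar x y y' = r (x, y) - r (x, y') := by
    rw [hh, hθstar]
    simp only [Pi.add_apply, Pi.smul_apply, smul_eq_mul]
    field_simp
    ring
  have hL_star : L θstar = (1 / (Fintype.card X * (Fintype.card Y : ℝ) ^ 2)) *
      ∑ x, ∑ y, ∑ y', -sigmoid (r (x, y) - r (x, y')) * log (sigmoid (r (x, y) - r (x, y'))) := by
    simp only [hL, hmargin_star]
  refine ⟨fun θ => ?_, fun θhat hmin x y y' => ?_⟩
  · rw [hL_star, hL]
    exact mul_le_mul_of_nonneg_left (sum_le_sum fun x _ =>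
      sum_sum_sigmoid_log_sigmoid_self_le (hr_anti x) (hmargin_anti θ x)) (by positivity)
  · by_contra hne
    have : Nonempty X := ⟨x⟩
    have : Nonempty Y := ⟨y⟩
    refine (hmin θstar).not_gt ?_
    rw [hL_star, hL]
    exact mul_lt_mul_of_pos_left (sum_lt_sum (fun x _ =>
      sum_sum_sigmoid_log_sigmoid_self_le (hr_anti x) (hmargin_anti θhat x))
      ⟨x, mem_univ _, sum_sum_sigmoid_log_sigmoid_self_lt (hr_anti x) (hmargin_anti θhat x) hne⟩)
      (by positivity)

/-- `θ* = θ_ref + r/β` is a global minimizer of the population DPO loss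
`L(θ) = (1/(|X||Y|²)) ∑_{x,y,y'} −σ(r(x,y) − r(x,y')) log σ(h_θ(x,y,y'))`, and every global
minimizer `θ̂` satisfies `h_{θ̂}(x,y,y') = r(x,y) − r(x,y')` for all `x, y, y'`. -/
theorem dpo_population_global_minimizers
    {X Y : Type*} [Fintype X] [Nonempty X] [Fintype Y] [Nonempty Y]
    (θref : X × Y → ℝ) (β : ℝ) (hβ : 0 < β) (r : X × Y → ℝ)
    (hmargin : (X × Y → ℝ) → X → Y → Y → ℝ)
    (hh : ∀ θ : X × Y → ℝ, ∀ x y y', hmargin θ x y y' =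
      β * ((θ (x, y) - θref (x, y)) - (θ (x, y') - θref (x, y'))))
    (L : (X × Y → ℝ) → ℝ)
    (hL : ∀ θ : X × Y → ℝ, L θ =
      (1 / (Fintype.card X * (Fintype.card Y : ℝ) ^ 2)) *
        ∑ x, ∑ y, ∑ y',
          -sigm (r (x, y) - r (x, y')) * Real.log (sigm (hmargin θ x y y')))
    (θstar : X × Y → ℝ) (hθstar : θstar = θref + (1 / β) • r) :
    (∀ θ : X × Y → ℝ, L θstar ≤ L θ) ∧
    (∀ θhat : X × Y → ℝ, (∀ θ, L θhat ≤ L θ) →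
      ∀ x y y', hmargin θhat x y y' = r (x, y) - r (x, y')) :=
  dpo_population_global_minimizers_general θref β hβ r hmargin hh L hL θstar hθstar
end

section
/- Let X and Y be finite nonempty sets, θ, θ_ref : X × Y → ℝ, β > 0, and r : X × Y → ℝ. Define r̂_θ(x,y) = β·log(π_θ(y|x)/π_{θ_ref}(y|x)) with π_θ(y|x) = exp(θ(x,y)) / Σ_{y'∈Y} exp(θ(x,y')), M₁(x,y,y';θ) = |(r(x,y) − r(x,y')) − (r̂_θ(x,y) − r̂_θ(x,y'))|, and Dist(θ) = sqrt( (1/(|X|·|Y|²)) · Σ_{x∈X} Σ_{y,y'∈Y} M₁(x,y,y';θ)² ). Then Dist(θ) = 0 if and only if for every x ∈ X the policy π_θ(·|x) equals the Gibbs policy π*(y|x) = π_{θ_ref}(y|x)·exp(r(x,y)/β) / Z(x), where Z(x) = Σ_{y'∈Y} π_{θ_ref}(y'|x)·exp(r(x,y')/β). -/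
/-- `Dist(θ) = 0` iff for every context `x` the softmax policy `π_θ(·|x)` equals
the Gibbs policy `π*(y|x) = π_ref(y|x) exp(r(x,y)/β) / Z(x)`. -/
theorem dist_eq_zero_iff_gibbs_policy
    {X Y : Type*} [Fintype X] [Nonempty X] [Fintype Y] [Nonempty Y]
    (θ θref : X × Y → ℝ) (β : ℝ) (hβ : 0 < β) (r : X × Y → ℝ)
    (pol : (X × Y → ℝ) → X → Y → ℝ)
    (hpol : ∀ φ : X × Y → ℝ, ∀ x y,
      pol φ x y = Real.exp (φ (x, y)) / ∑ y', Real.exp (φ (x, y')))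
    (rhat : X → Y → ℝ)
    (hrhat : ∀ x y, rhat x y = β * Real.log (pol θ x y / pol θref x y))
    (M₁ : X → Y → Y → ℝ)
    (hM₁ : ∀ x y y', M₁ x y y' = |(r (x, y) - r (x, y')) - (rhat x y - rhat x y')|)
    (Dist : ℝ)
    (hDist : Dist = Real.sqrt ((1 / (Fintype.card X * (Fintype.card Y : ℝ) ^ 2)) *
      ∑ x, ∑ y, ∑ y', (M₁ x y y') ^ 2))
    (Z : X → ℝ)
    (hZ : ∀ x, Z x = ∑ y', pol θref x y' * Real.exp (r (x, y') / β)) :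
    Dist = 0 ↔
      ∀ x y, pol θ x y = pol θref x y * Real.exp (r (x, y) / β) / Z x := by
  have hexp_sum_pos : ∀ (φ : X × Y → ℝ) x, 0 < ∑ y', Real.exp (φ (x, y')) :=
    fun φ x => Finset.sum_pos (fun _ _ => Real.exp_pos _) Finset.univ_nonempty
  have hpos : ∀ (φ : X × Y → ℝ) x y, 0 < pol φ x y := fun φ x y => by
    rw [hpol]; exact div_pos (Real.exp_pos _) (hexp_sum_pos φ x)
  have hsum : ∀ (φ : X × Y → ℝ) x, ∑ y, pol φ x y = 1 := fun φ x => by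
    simp only [hpol]
    rw [← Finset.sum_div, div_self (ne_of_gt (hexp_sum_pos φ x))]
  have hZpos : ∀ x, 0 < Z x := fun x => by
    rw [hZ]
    exact Finset.sum_pos (fun y _ => mul_pos (hpos θref x y) (Real.exp_pos _))
      Finset.univ_nonempty
  have hcard : (0:ℝ) < (Fintype.card X) * (Fintype.card Y : ℝ) ^ 2 := by
    have h1 : (0:ℝ) < (Fintype.card X : ℝ) := by exact_mod_cast Fintype.card_pos
    have h2 : (0:ℝ) < (Fintype.card Y : ℝ) := by exact_mod_cast Fintype.card_pos
    positivity
  have hSnn : (0:ℝ) ≤ ∑ x, ∑ y, ∑ y', (M₁ x y y') ^ 2 :=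
    Finset.sum_nonneg fun x _ => Finset.sum_nonneg fun y _ =>
      Finset.sum_nonneg fun y' _ => sq_nonneg _
  constructor
  · intro h0
    have hS : ∑ x, ∑ y, ∑ y', (M₁ x y y') ^ 2 = 0 := by
      rw [hDist] at h0
      have h1 := Real.sqrt_eq_zero'.mp h0
      have hc : (0:ℝ) < 1 / ((Fintype.card X) * (Fintype.card Y : ℝ) ^ 2) :=
        one_div_pos.mpr hcard
      have hprod : 1 / ((Fintype.card X) * (Fintype.card Y : ℝ) ^ 2) *
          ∑ x, ∑ y, ∑ y', (M₁ x y y') ^ 2 = 0 :=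
        le_antisymm h1 (mul_nonneg hc.le hSnn)
      exact (mul_eq_zero.mp hprod).resolve_left (ne_of_gt hc)
    have hM0 : ∀ a b c, M₁ a b c = 0 := by
      intro a b c
      have h1 := (Finset.sum_eq_zero_iff_of_nonneg (fun x _ =>
        Finset.sum_nonneg fun y _ => Finset.sum_nonneg fun y' _ => sq_nonneg (M₁ x y y'))).mp
        hS a (Finset.mem_univ a)
      have h2 := (Finset.sum_eq_zero_iff_of_nonneg (fun y _ =>
        Finset.sum_nonneg fun y' _ => sq_nonneg (M₁ a y y'))).mp h1 b (Finset.mem_univ b)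
      have h3 := (Finset.sum_eq_zero_iff_of_nonneg (fun y' _ =>
        sq_nonneg (M₁ a b y'))).mp h2 c (Finset.mem_univ c)
      exact pow_eq_zero_iff (by norm_num) |>.mp h3
    intro x y
    have hm : ∀ b c : Y, rhat x b - r (x, b) = rhat x c - r (x, c) := by
      intro b c
      have := hM0 x b c
      rw [hM₁, abs_eq_zero] at this
      linarith
    set y0 := Classical.arbitrary Y with hy0
    set c := rhat x y0 - r (x, y0) with hcdef
    have hrhat_eq : ∀ b, rhat x b = r (x, b) + c := fun b => by
      have := hm b y0; linarith
    have hpolθ : ∀ b, pol θ x b = pol θref x b * Real.exp ((r (x, b) + c) / β) := by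
      intro b
      have h1 : β * Real.log (pol θ x b / pol θref x b) = r (x, b) + c := by
        rw [← hrhat x b]; exact hrhat_eq b
      have h2 : Real.log (pol θ x b / pol θref x b) = (r (x, b) + c) / β := by
        rw [eq_div_iff hβ.ne']; linarith
      have h3 : pol θ x b / pol θref x b = Real.exp ((r (x, b) + c) / β) := by
        rw [← h2, Real.exp_log (div_pos (hpos θ x b) (hpos θref x b))]
      rw [div_eq_iff (ne_of_gt (hpos θref x b))] at h3
      rw [h3, mul_comm]
    have hsum1 : (1:ℝ) = Real.exp (c / β) * Z x := by
      rw [hZ, ← hsum θ x, Finset.mul_sum]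
      apply Finset.sum_congr rfl
      intro b _
      rw [hpolθ b, add_div, Real.exp_add]; ring
    have hE : Real.exp (c / β) = 1 / Z x := by
      rw [eq_div_iff (ne_of_gt (hZpos x))]; linarith
    rw [hpolθ y, add_div, Real.exp_add, hE]; ring
  · intro h
    have hM0 : ∀ a b c, M₁ a b c = 0 := by
      intro a b c
      have hr : ∀ y, rhat a y = r (a, y) - β * Real.log (Z a) := by
        intro y
        rw [hrhat, h a y]
        have hq : pol θref a y * Real.exp (r (a, y) / β) / Z a / pol θref a y
            = Real.exp (r (a, y) / β) / Z a := by
          rw [div_div, mul_comm (Z a), mul_div_mul_left _ _ (ne_of_gt (hpos θref a y))]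
        rw [hq, Real.log_div (Real.exp_ne_zero _) (ne_of_gt (hZpos a)), Real.log_exp]
        field_simp
      rw [hM₁, hr b, hr c, abs_eq_zero]; ring
    have hzero : ∑ x, ∑ y, ∑ y', (M₁ x y y') ^ 2 = 0 :=
      Finset.sum_eq_zero fun x _ => Finset.sum_eq_zero fun y _ =>
        Finset.sum_eq_zero fun y' _ => by rw [hM0]; ring
    rw [hDist, hzero, mul_zero, Real.sqrt_zero]
end

section
/- Let X and Y be finite nonempty sets, θ, θ_ref : X × Y → ℝ, β > 0, and r : X × Y → ℝ. Define r̂_θ(x,y) = β·log(π_θ(y|x)/π_{θ_ref}(y|x)) with π_θ(y|x) = exp(θ(x,y)) / Σ_{y'∈Y} exp(θ(x,y')), M₁(x,y,y';θ) = |(r(x,y) − r(x,y')) − (r̂_θ(x,y) − r̂_θ(x,y'))|, and Dist(θ) = sqrt( (1/(|X|·|Y|²)) · Σ_{x∈X} Σ_{y,y'∈Y} M₁(x,y,y';θ)² ). Then max_{x∈X, y,y'∈Y} M₁(x,y,y';θ)² ≥ 2·Dist(θ)². -/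
/-!
For fixed `x` put `δ y = r(x,y) - r̂(x,y)`, so that `M₁ x y y' = |δ y - δ y'|`. The values of `δ`
lie in an interval `[b, a]` with `(a - b)² ≤ max M₁²`, hence within `(a - b)/2` of its midpoint
`c`. Expanding around `c`,
`∑_{y,y'} (δ y - δ y')² = 2n ∑ (δ y - c)² - 2 (∑ (δ y - c))² ≤ 2n · n (a - b)²/4`,
so the mean of `M₁²` over pairs is at most half its maximum.
-/

open Finset

theorem Finset.sum_sum_sub_sq_eq {ι R : Type*} [CommRing R] (s : Finset ι) (f : ι → R)
    (c : R) :
    ∑ i ∈ s, ∑ j ∈ s, (f i - f j) ^ 2 =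
      2 * #s * ∑ i ∈ s, (f i - c) ^ 2 - 2 * (∑ i ∈ s, (f i - c)) ^ 2 := by
  have expand : ∀ i j, (f i - f j) ^ 2 =
      (f i - c) ^ 2 + (f j - c) ^ 2 - 2 * ((f i - c) * (f j - c)) := fun i j => by ring
  simp only [expand, sum_add_distrib, sum_sub_distrib, sum_const, nsmul_eq_mul, ← mul_sum,
    ← sum_mul]
  ring

theorem sq_sub_midpoint_le {x a b : ℝ} (hxa : x ≤ a) (hbx : b ≤ x) :
    (x - (a + b) / 2) ^ 2 ≤ (a - b) ^ 2 / 4 := by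
  nlinarith [mul_nonneg (sub_nonneg.2 hxa) (sub_nonneg.2 hbx)]

theorem Finset.sum_sum_sub_sq_le {ι : Type*} {s : Finset ι} (hs : s.Nonempty) {f : ι → ℝ}
    {D : ℝ} (hD : ∀ i ∈ s, ∀ j ∈ s, (f i - f j) ^ 2 ≤ D) :
    ∑ i ∈ s, ∑ j ∈ s, (f i - f j) ^ 2 ≤ #s ^ 2 * D / 2 := by
  obtain ⟨imax, himax, hle_max⟩ := s.exists_max_image f hs
  obtain ⟨imin, himin, hmin_le⟩ := s.exists_min_image f hs
  set c := (f imax + f imin) / 2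
  have hcenter : ∑ i ∈ s, (f i - c) ^ 2 ≤ #s * (D / 4) := by
    rw [← nsmul_eq_mul]
    refine sum_le_card_nsmul s _ _ fun i hi => ?_
    calc (f i - c) ^ 2 ≤ (f imax - f imin) ^ 2 / 4 :=
          sq_sub_midpoint_le (hle_max i hi) (hmin_le i hi)
      _ ≤ D / 4 := by gcongr; exact hD imax himax imin himin
  calc ∑ i ∈ s, ∑ j ∈ s, (f i - f j) ^ 2
      = 2 * #s * ∑ i ∈ s, (f i - c) ^ 2 - 2 * (∑ i ∈ s, (f i - c)) ^ 2 :=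
        sum_sum_sub_sq_eq s f c
    _ ≤ 2 * #s * (#s * (D / 4)) := by
      have := sq_nonneg (∑ i ∈ s, (f i - c))
      have := mul_le_mul_of_nonneg_left hcenter (by positivity : (0 : ℝ) ≤ 2 * #s)
      linarith
    _ = #s ^ 2 * D / 2 := by ring

theorem max_sq_M1_ge_two_dist_sq
    {X Y : Type*} [Fintype X] [Nonempty X] [Fintype Y] [Nonempty Y]
    (r : X × Y → ℝ)
    (rhat : X → Y → ℝ)
    (M₁ : X → Y → Y → ℝ)
    (hM₁ : ∀ x y y', M₁ x y y' = |(r (x, y) - r (x, y')) - (rhat x y - rhat x y')|)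
    (Dist : ℝ)
    (hDist : Dist = Real.sqrt ((1 / (Fintype.card X * (Fintype.card Y : ℝ) ^ 2)) *
      ∑ x, ∑ y, ∑ y', (M₁ x y y') ^ 2)) :
    2 * Dist ^ 2 ≤
      (Finset.univ : Finset (X × Y × Y)).sup'
        (by simp [Finset.univ_nonempty])
        (fun d => (M₁ d.1 d.2.1 d.2.2) ^ 2) := by
  set S := (univ : Finset (X × Y × Y)).sup' univ_nonempty fun d => M₁ d.1 d.2.1 d.2.2 ^ 2
  have hle_S : ∀ x y y', M₁ x y y' ^ 2 ≤ S := fun x y y' =>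
    le_sup' (fun d : X × Y × Y => M₁ d.1 d.2.1 d.2.2 ^ 2) (mem_univ (x, y, y'))
  have hrow : ∀ x, ∑ y, ∑ y', M₁ x y y' ^ 2 ≤ Fintype.card Y ^ 2 * S / 2 := fun x => by
    have hM₁_sq : ∀ y y',
        M₁ x y y' ^ 2 = ((r (x, y) - rhat x y) - (r (x, y') - rhat x y')) ^ 2 :=
      fun y y' => by rw [hM₁, sq_abs]; ring
    simp only [hM₁_sq]
    exact sum_sum_sub_sq_le univ_nonempty fun y _ y' _ => hM₁_sq y y' ▸ hle_S x y y'
  have htotal :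
      ∑ x, ∑ y, ∑ y', M₁ x y y' ^ 2 ≤ Fintype.card X * (Fintype.card Y ^ 2 * S / 2) := by
    simpa using sum_le_card_nsmul univ _ _ fun x _ => hrow x
  rw [hDist, Real.sq_sqrt (by positivity), one_div_mul_eq_div, ← mul_div_assoc,
    div_le_iff₀ (by positivity)]
  linarith
end
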